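/- Let C be a topologically G-graded C*-algebra. The space 𝒦_G(C) of convolution dominated kernels K : G × G → C (with K(g,h) ∈ C_{gh⁻¹} and norm ‖K‖ = inf{‖κ‖_{ℓ¹(G)} : ‖K(g,h)‖ ≤ |κ(gh⁻¹)| for all g,h}) is a Banach *-algebra under the multiplication (K ∙ L)(g,h) = Σ_k K(g,k)L(k,h) and involution K^∙(g,h) = K(h,g)*. -/

import Mathlib

/-!
A kernel dominated by `κ ∈ ℓ¹(G)` inherits every estimate from `κ`: `K + L` is dominated by
`κ + ρ`, the product `K ∙ L` by the convolution `κ ∗ ρ`, whose `ℓ¹`-norm is `‖κ‖₁ ‖ρ‖₁`, and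
`K^∙` by `κ ∘ inv`; taking infima gives the triangle inequality, submultiplicativity and the
isometry of the involution. For completeness, `‖K (g, h)‖ ≤ ‖K‖` makes a Cauchy sequence converge
pointwise. Along a subsequence with `‖u (φ (i + 1)) - u (φ i)‖ < 2⁻ⁱ`, the sum of dominating
functions of the consecutive differences dominates the tail `K - u (φ j)` and has `ℓ¹`-norm at
most `2¹⁻ʲ`. The grading survives products and limits because every `C_g` is closed.
-/

open Filter Topology

section ConvolutionDominatedKernels

variable {G : Type*} [Group G] {C : Type*} [NormedRing C]

def kernelDomSet (K : G × G → C) : Set ℝ :=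
  {c | ∃ κ : G → ℝ, Summable (fun g => |κ g|) ∧
        (∀ g h : G, ‖K (g, h)‖ ≤ |κ (g * h⁻¹)|) ∧ c = ∑' g : G, |κ g|}

noncomputable def kernelNorm (K : G × G → C) : ℝ := sInf (kernelDomSet K)

end ConvolutionDominatedKernels

theorem summable_tsum_comm_of_nonneg {α β : Type*} {f : α → β → ℝ} (hf : ∀ a b, 0 ≤ f a b)
    (hrow : ∀ a, Summable (f a)) (hsum : Summable fun a => ∑' b, f a b) :
    (∀ b, Summable fun a => f a b) ∧ Summable (fun b => ∑' a, f a b) ∧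
      ∑' b, ∑' a, f a b = ∑' a, ∑' b, f a b := by
  have hf' : Summable (Function.uncurry f) :=
    (summable_prod_of_nonneg fun p => hf p.1 p.2).2 ⟨hrow, hsum⟩
  obtain ⟨hcol, hcolsum⟩ := (summable_prod_of_nonneg fun p => hf p.2 p.1).1 hf'.prod_symm
  exact ⟨hcol, hcolsum, hf'.tsum_comm' hrow hcol⟩

section DiscreteConvolution

variable {G : Type*} [Group G] {κ ρ : G → ℝ}

noncomputable def discreteConv (κ ρ : G → ℝ) (x : G) : ℝ := ∑' t, κ t * ρ (t⁻¹ * x)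

lemma discreteConv_nonneg (hκ0 : 0 ≤ κ) (hρ0 : 0 ≤ ρ) : 0 ≤ discreteConv κ ρ :=
  fun _ => tsum_nonneg fun _ => mul_nonneg (hκ0 _) (hρ0 _)

-- Young's inequality on `ℓ¹(G)`, an equality for nonnegative functions.
lemma summable_discreteConv (hκ0 : 0 ≤ κ) (hρ0 : 0 ≤ ρ) (hκ : Summable κ) (hρ : Summable ρ) :
    (∀ x, Summable fun t => κ t * ρ (t⁻¹ * x)) ∧ Summable (discreteConv κ ρ) ∧
      ∑' x, discreteConv κ ρ x = (∑' t, κ t) * ∑' t, ρ t := by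
  have hrow : ∀ t, HasSum (fun x => κ t * ρ (t⁻¹ * x)) (κ t * ∑' s, ρ s) := fun t =>
    ((Equiv.mulLeft t⁻¹).hasSum_iff.2 hρ.hasSum).mul_left (κ t)
  obtain ⟨hcol, hconv, hcomm⟩ := summable_tsum_comm_of_nonneg
    (fun t x => mul_nonneg (hκ0 t) (hρ0 (t⁻¹ * x))) (fun t => (hrow t).summable)
    (by simpa only [(hrow _).tsum_eq] using hκ.mul_right (∑' s, ρ s))
  refine ⟨hcol, hconv, ?_⟩
  simp only [discreteConv, hcomm, (hrow _).tsum_eq, tsum_mul_right]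

lemma hasSum_discreteConv_mul_inv {g h : G} (hs : Summable fun t => κ t * ρ (t⁻¹ * (g * h⁻¹))) :
    HasSum (fun k => κ (g * k⁻¹) * ρ (k * h⁻¹)) (discreteConv κ ρ (g * h⁻¹)) := by
  simpa [discreteConv, Function.comp_def, div_eq_mul_inv, mul_assoc] using
    (Equiv.divLeft g).hasSum_iff.2 hs.hasSum

end DiscreteConvolution

section KernelNorm

variable {G : Type*} [Group G] {C : Type*} [NormedRing C] {K L M : G × G → C} {c d : ℝ}

lemma mem_kernelDomSet_iff : c ∈ kernelDomSet K ↔ ∃ κ : G → ℝ, 0 ≤ κ ∧ Summable κ ∧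
    (∀ g h : G, ‖K (g, h)‖ ≤ κ (g * h⁻¹)) ∧ c = ∑' g, κ g := by
  constructor
  · rintro ⟨κ, hκ, hK, rfl⟩
    exact ⟨fun g => |κ g|, fun g => abs_nonneg _, hκ, hK, rfl⟩
  · rintro ⟨κ, hκ0, hκ, hK, rfl⟩
    have habs : (fun g => |κ g|) = κ := funext fun g => abs_of_nonneg (hκ0 g)
    exact ⟨κ, habs.symm ▸ hκ, by simpa only [abs_of_nonneg (hκ0 _)] using hK, by rw [habs]⟩

lemma nonneg_of_mem_kernelDomSet (hc : c ∈ kernelDomSet K) : 0 ≤ c := by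
  obtain ⟨κ, hκ0, -, -, rfl⟩ := mem_kernelDomSet_iff.1 hc
  exact tsum_nonneg hκ0

lemma bddBelow_kernelDomSet (K : G × G → C) : BddBelow (kernelDomSet K) :=
  ⟨0, fun _ => nonneg_of_mem_kernelDomSet⟩

lemma kernelNorm_nonneg (K : G × G → C) : 0 ≤ kernelNorm K :=
  Real.sInf_nonneg fun _ => nonneg_of_mem_kernelDomSet

lemma kernelNorm_le_of_mem (hc : c ∈ kernelDomSet K) : kernelNorm K ≤ c :=
  csInf_le (bddBelow_kernelDomSet K) hc

lemma norm_apply_le_kernelNorm (hK : (kernelDomSet K).Nonempty) (p : G × G) :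
    ‖K p‖ ≤ kernelNorm K :=
  le_csInf hK fun c hc => by
    obtain ⟨κ, hκ0, hκ, hKκ, rfl⟩ := mem_kernelDomSet_iff.1 hc
    exact (hKκ p.1 p.2).trans (hκ.le_tsum _ fun g _ => hκ0 g)

lemma kernelDomSet_subset_of_norm_le (h : ∀ p, ‖M p‖ ≤ ‖K p‖) :
    kernelDomSet K ⊆ kernelDomSet M := by
  rintro c ⟨κ, hκ, hK, rfl⟩
  exact ⟨κ, hκ, fun g g' => (h (g, g')).trans (hK g g'), rfl⟩

lemma kernelNorm_congr (h : ∀ p, ‖M p‖ = ‖K p‖) : kernelNorm M = kernelNorm K :=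
  congrArg sInf <| (kernelDomSet_subset_of_norm_le fun p => (h p).ge).antisymm
    (kernelDomSet_subset_of_norm_le fun p => (h p).le)

lemma add_mem_kernelDomSet (hM : ∀ p, ‖M p‖ ≤ ‖K p‖ + ‖L p‖) (hc : c ∈ kernelDomSet K)
    (hd : d ∈ kernelDomSet L) : c + d ∈ kernelDomSet M := by
  obtain ⟨κ, hκ0, hκ, hKκ, rfl⟩ := mem_kernelDomSet_iff.1 hc
  obtain ⟨ρ, hρ0, hρ, hLρ, rfl⟩ := mem_kernelDomSet_iff.1 hd
  exact mem_kernelDomSet_iff.2 ⟨κ + ρ, add_nonneg hκ0 hρ0, hκ.add hρ,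
    fun g h => (hM (g, h)).trans (add_le_add (hKκ g h) (hLρ g h)), (hκ.tsum_add hρ).symm⟩

lemma kernelDomSet_nonempty_of_norm_le_add (hM : ∀ p, ‖M p‖ ≤ ‖K p‖ + ‖L p‖)
    (hK : (kernelDomSet K).Nonempty) (hL : (kernelDomSet L).Nonempty) :
    (kernelDomSet M).Nonempty :=
  let ⟨c, hc⟩ := hK
  let ⟨d, hd⟩ := hL
  ⟨c + d, add_mem_kernelDomSet hM hc hd⟩

open scoped Pointwise in
lemma kernelNorm_le_add (hM : ∀ p, ‖M p‖ ≤ ‖K p‖ + ‖L p‖)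
    (hK : (kernelDomSet K).Nonempty) (hL : (kernelDomSet L).Nonempty) :
    kernelNorm M ≤ kernelNorm K + kernelNorm L := by
  unfold kernelNorm
  rw [← csInf_add hK (bddBelow_kernelDomSet K) hL (bddBelow_kernelDomSet L)]
  refine le_csInf (hK.add hL) ?_
  rintro _ ⟨c, hc, d, hd, rfl⟩
  exact kernelNorm_le_of_mem (add_mem_kernelDomSet hM hc hd)

lemma smul_mem_kernelDomSet {𝕜 : Type*} [NormedField 𝕜] [NormedSpace 𝕜 C] (a : 𝕜)
    (hc : c ∈ kernelDomSet K) : ‖a‖ * c ∈ kernelDomSet (a • K) := by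
  obtain ⟨κ, hκ0, hκ, hKκ, rfl⟩ := mem_kernelDomSet_iff.1 hc
  refine mem_kernelDomSet_iff.2 ⟨fun g => ‖a‖ * κ g, fun g => mul_nonneg (norm_nonneg a) (hκ0 g),
    hκ.mul_left _, fun g h => ?_, tsum_mul_left.symm⟩
  exact (norm_smul a (K (g, h))).trans_le (mul_le_mul_of_nonneg_left (hKκ g h) (norm_nonneg a))

open scoped Pointwise in
lemma kernelNorm_le_mul (hmul : ∀ c ∈ kernelDomSet K, ∀ d ∈ kernelDomSet L, c * d ∈ kernelDomSet M)
    (hK : (kernelDomSet K).Nonempty) (hL : (kernelDomSet L).Nonempty) :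
    kernelNorm M ≤ kernelNorm K * kernelNorm L := by
  have hc : ∀ c ∈ kernelDomSet K, kernelNorm M ≤ c * kernelNorm L := fun c hc =>
    calc kernelNorm M ≤ sInf (c • kernelDomSet L) := le_csInf hL.smul_set <| by
          rintro _ ⟨d, hd, rfl⟩
          exact kernelNorm_le_of_mem (hmul c hc d hd)
      _ = c * kernelNorm L := Real.sInf_smul_of_nonneg (nonneg_of_mem_kernelDomSet hc) _
  calc kernelNorm M ≤ sInf (kernelNorm L • kernelDomSet K) := le_csInf hK.smul_set <| by
        rintro _ ⟨c, hc', rfl⟩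
        exact (hc c hc').trans_eq (mul_comm _ _)
    _ = kernelNorm K * kernelNorm L :=
      (Real.sInf_smul_of_nonneg (kernelNorm_nonneg L) _).trans (mul_comm _ _)

end KernelNorm

section KernelOperations

variable {G C : Type*}

-- The paper's `K ∙ L` and `K^∙`.
noncomputable def kernelMul [Mul C] [AddCommMonoid C] [TopologicalSpace C] (K L : G × G → C)
    (p : G × G) : C :=
  ∑' k, K (p.1, k) * L (k, p.2)

def kernelStar [Star C] (K : G × G → C) (p : G × G) : C := star (K (p.2, p.1))

lemma kernelStar_kernelStar [InvolutiveStar C] (K : G × G → C) : kernelStar (kernelStar K) = K :=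
  funext fun _ => star_star _

end KernelOperations

section KernelAlgebra

variable {G : Type*} [Group G] {C : Type*} [NormedRing C] {K L : G × G → C} {c d : ℝ}

lemma mul_mem_kernelDomSet (hc : c ∈ kernelDomSet K) (hd : d ∈ kernelDomSet L) :
    c * d ∈ kernelDomSet (kernelMul K L) := by
  obtain ⟨κ, hκ0, hκ, hKκ, rfl⟩ := mem_kernelDomSet_iff.1 hc
  obtain ⟨ρ, hρ0, hρ, hLρ, rfl⟩ := mem_kernelDomSet_iff.1 hd
  obtain ⟨hcol, hconv, hsum⟩ := summable_discreteConv hκ0 hρ0 hκ hρ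
  refine mem_kernelDomSet_iff.2
    ⟨discreteConv κ ρ, discreteConv_nonneg hκ0 hρ0, hconv, fun g h => ?_, hsum.symm⟩
  have hterm : ∀ k, ‖K (g, k) * L (k, h)‖ ≤ κ (g * k⁻¹) * ρ (k * h⁻¹) := fun k =>
    (norm_mul_le _ _).trans (mul_le_mul (hKκ g k) (hLρ k h) (norm_nonneg _) (hκ0 _))
  have hgh := hasSum_discreteConv_mul_inv (hcol (g * h⁻¹))
  have hnorm : Summable fun k => ‖K (g, k) * L (k, h)‖ :=
    hgh.summable.of_nonneg_of_le (fun _ => norm_nonneg _) hterm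
  exact (norm_tsum_le_tsum_norm hnorm).trans (hasSum_le hterm hnorm.hasSum hgh)

lemma kernelNorm_kernelMul_le (hK : (kernelDomSet K).Nonempty) (hL : (kernelDomSet L).Nonempty) :
    kernelNorm (kernelMul K L) ≤ kernelNorm K * kernelNorm L :=
  kernelNorm_le_mul (fun _ hc _ hd => mul_mem_kernelDomSet hc hd) hK hL

lemma kernelDomSet_subset_kernelStar [StarRing C] [NormedStarGroup C] (K : G × G → C) :
    kernelDomSet K ⊆ kernelDomSet (kernelStar K) := by
  rintro c ⟨κ, hκ, hKκ, rfl⟩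
  refine ⟨fun x => κ x⁻¹, (Equiv.inv G).summable_iff.2 hκ, fun g h => ?_,
    ((Equiv.inv G).tsum_eq _).symm⟩
  simpa only [kernelStar, norm_star, mul_inv_rev, inv_inv] using hKκ h g

lemma kernelDomSet_kernelStar [StarRing C] [NormedStarGroup C] (K : G × G → C) :
    kernelDomSet (kernelStar K) = kernelDomSet K := by
  refine (kernelDomSet_subset_kernelStar _).antisymm' ?_
  simpa only [kernelStar_kernelStar] using kernelDomSet_subset_kernelStar (kernelStar K)

lemma kernelNorm_kernelStar [StarRing C] [NormedStarGroup C] (K : G × G → C) :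
    kernelNorm (kernelStar K) = kernelNorm K :=
  congrArg sInf (kernelDomSet_kernelStar K)

end KernelAlgebra

section Completeness

variable {G : Type*} [Group G] {C : Type*} [NormedRing C] {K : G × G → C}

lemma exists_mem_kernelDomSet_sub_le_tsum {u : ℕ → G × G → C} {b : ℕ → ℝ} (hb : Summable b)
    (hstep : ∀ i, ∃ c ∈ kernelDomSet (u (i + 1) - u i), c ≤ b i)
    (hlim : ∀ p, Tendsto (fun n => u n p) atTop (𝓝 (K p))) :
    ∃ c ∈ kernelDomSet (K - u 0), c ≤ ∑' i, b i := by
  choose c hc hcb using hstep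
  choose κ hκ0 hκ hκu hcκ using fun i => mem_kernelDomSet_iff.1 (hc i)
  have hκb : ∀ i, ∑' x, κ i x ≤ b i := fun i => hcκ i ▸ hcb i
  have hsum : Summable fun i => ∑' x, κ i x :=
    hb.of_nonneg_of_le (fun i => tsum_nonneg (hκ0 i)) hκb
  obtain ⟨hcol, hσ, hσsum⟩ := summable_tsum_comm_of_nonneg (fun i => hκ0 i) hκ hsum
  refine ⟨_, mem_kernelDomSet_iff.2 ⟨fun x => ∑' i, κ i x, fun x => tsum_nonneg fun i => hκ0 i x,
    hσ, fun g h => ?_, rfl⟩, hσsum ▸ hsum.tsum_le_tsum hκb hb⟩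
  have hpartial : ∀ n, ‖u n (g, h) - u 0 (g, h)‖ ≤ ∑' i, κ i (g * h⁻¹) := fun n =>
    calc ‖u n (g, h) - u 0 (g, h)‖ = ‖∑ i ∈ Finset.range n, (u (i + 1) - u i) (g, h)‖ := by
          rw [← Finset.sum_range_sub fun i => u i (g, h)]
          rfl
      _ ≤ ∑ i ∈ Finset.range n, κ i (g * h⁻¹) :=
          (norm_sum_le _ _).trans (Finset.sum_le_sum fun i _ => hκu i g h)
      _ ≤ ∑' i, κ i (g * h⁻¹) := (hcol _).sum_le_tsum _ fun i _ => hκ0 i _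
  exact le_of_tendsto ((hlim (g, h)).sub_const _).norm (Eventually.of_forall hpartial)

lemma exists_tendsto_apply_of_cauchy [CompleteSpace C] {u : ℕ → G × G → C}
    (hu : ∀ m n, (kernelDomSet (u m - u n)).Nonempty)
    (hcauchy : ∀ ε > (0 : ℝ), ∃ N, ∀ m ≥ N, ∀ n ≥ N, kernelNorm (u m - u n) < ε) :
    ∃ K : G × G → C, ∀ p, Tendsto (fun n => u n p) atTop (𝓝 (K p)) := by
  refine ⟨fun p => limUnder atTop fun n => u n p, fun p => ?_⟩
  refine (Metric.cauchySeq_iff'.2 fun ε hε => ?_).tendsto_limUnder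
  obtain ⟨N, hN⟩ := hcauchy ε hε
  exact ⟨N, fun n hn => (dist_eq_norm _ _).trans_lt <|
    (norm_apply_le_kernelNorm (hu n N) p).trans_lt (hN n hn N le_rfl)⟩

lemma exists_mem_kernelDomSet_sub_le_geometric {v : ℕ → G × G → C}
    (hv : ∀ m n, (kernelDomSet (v m - v n)).Nonempty)
    (hfast : ∀ i, kernelNorm (v (i + 1) - v i) < (1 / 2) ^ i)
    (hlim : ∀ p, Tendsto (fun n => v n p) atTop (𝓝 (K p))) (j : ℕ) :
    ∃ c ∈ kernelDomSet (K - v j), c ≤ (1 / 2) ^ j * 2 := by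
  have hstep : ∀ i, ∃ c ∈ kernelDomSet (v (j + i + 1) - v (j + i)),
      c ≤ (1 / 2) ^ j * (1 / 2) ^ i := fun i => by
    obtain ⟨c, hc, hlt⟩ := exists_lt_of_csInf_lt (hv _ _) (hfast (j + i))
    exact ⟨c, hc, (pow_add _ j i).subst hlt.le⟩
  have hlim_shift : ∀ p, Tendsto (fun i => v (j + i) p) atTop (𝓝 (K p)) := fun p =>
    (hlim p).comp (strictMono_id.const_add j).tendsto_atTop
  simpa only [tsum_mul_left, tsum_geometric_two, add_zero] using
    exists_mem_kernelDomSet_sub_le_tsum (summable_geometric_two.mul_left _) hstep hlim_shift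

theorem exists_tendsto_kernelNorm_of_cauchy [CompleteSpace C] {u : ℕ → G × G → C}
    (hu : ∀ n, (kernelDomSet (u n)).Nonempty)
    (hcauchy : ∀ ε > (0 : ℝ), ∃ N, ∀ m ≥ N, ∀ n ≥ N, kernelNorm (u m - u n) < ε) :
    ∃ K : G × G → C, (∀ p, Tendsto (fun n => u n p) atTop (𝓝 (K p))) ∧
      (kernelDomSet K).Nonempty ∧ Tendsto (fun n => kernelNorm (u n - K)) atTop (𝓝 0) := by
  have hsub : ∀ m n, (kernelDomSet (u m - u n)).Nonempty := fun m n =>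
    kernelDomSet_nonempty_of_norm_le_add (fun p => norm_sub_le _ _) (hu m) (hu n)
  obtain ⟨K, hK⟩ := exists_tendsto_apply_of_cauchy hsub hcauchy
  choose N hN using fun i : ℕ => hcauchy ((1 / 2) ^ i) (by positivity)
  obtain ⟨φ, hφ, hφN⟩ := extraction_forall_of_eventually' (P := fun i k => N i ≤ k)
    fun i => ⟨N i, fun _ => id⟩
  have htail := exists_mem_kernelDomSet_sub_le_geometric (fun m n => hsub (φ m) (φ n))
    (fun i => hN i _ ((hφN i).trans (hφ.monotone i.le_succ)) _ (hφN i))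
    (fun p => (hK p).comp hφ.tendsto_atTop)
  have hbound : ∀ j, ∀ n ≥ φ j, kernelNorm (u n - K) ≤ (1 / 2) ^ j + (1 / 2) ^ j * 2 := by
    intro j n hn
    obtain ⟨c, hc, hcj⟩ := htail j
    have hc' : c ∈ kernelDomSet (u (φ j) - K) :=
      kernelDomSet_subset_of_norm_le (fun p => (norm_sub_rev _ _).le) hc
    refine (kernelNorm_le_add (fun p => norm_sub_le_norm_sub_add_norm_sub _ (u (φ j) p) _)
      (hsub n (φ j)) ⟨c, hc'⟩).trans (add_le_add ?_ ((kernelNorm_le_of_mem hc').trans hcj))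
    exact (hN j n ((hφN j).trans hn) _ (hφN j)).le
  obtain ⟨c, hc, -⟩ := htail 0
  refine ⟨K, hK, kernelDomSet_nonempty_of_norm_le_add (fun p => ?_) ⟨c, hc⟩ (hu (φ 0)), ?_⟩
  · exact (norm_le_norm_add_norm_sub' (K p) (u (φ 0) p)).trans_eq (add_comm _ _)
  refine Metric.tendsto_atTop.2 fun ε hε => ?_
  obtain ⟨j, hj⟩ := exists_pow_lt_of_lt_one (by positivity : 0 < ε / 3)
    (by norm_num : (1 / 2 : ℝ) < 1)
  refine ⟨φ j, fun n hn => ?_⟩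
  rw [Real.dist_0_eq_abs, abs_of_nonneg (kernelNorm_nonneg _)]
  linarith [hbound j n hn]

end Completeness

theorem convolution_dominated_kernels_banach_star_algebra_general {G : Type*} [Group G]
    {C : Type*} [NormedRing C] [StarRing C] [CStarRing C]
    [NormedAlgebra ℂ C] [CompleteSpace C]
    (𝔠 : G → Submodule ℂ C)
    (hclosed : ∀ g, IsClosed (𝔠 g : Set C))
    (hmulsub : ∀ g h : G, ∀ x ∈ 𝔠 g, ∀ y ∈ 𝔠 h, x * y ∈ 𝔠 (g * h))
    (hstarsub : ∀ g : G, ∀ x ∈ 𝔠 g, star x ∈ 𝔠 g⁻¹)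
    -- membership predicate for 𝒦_G(C)
    (mem𝒦 : (G × G → C) → Prop)
    (hmem : ∀ K, mem𝒦 K ↔ ((∀ g h : G, K (g, h) ∈ 𝔠 (g * h⁻¹)) ∧
        (kernelDomSet K).Nonempty)) :
    -- vector space structure, with triangle inequality
    (∀ K L, mem𝒦 K → mem𝒦 L → mem𝒦 (K + L) ∧
        kernelNorm (K + L) ≤ kernelNorm K + kernelNorm L) ∧
    (∀ (c : ℂ) K, mem𝒦 K → mem𝒦 (c • K)) ∧
    -- closed under the product, with submultiplicative norm
    (∀ K L, mem𝒦 K → mem𝒦 L →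
        mem𝒦 (fun p => ∑' k : G, K (p.1, k) * L (k, p.2)) ∧
        kernelNorm (fun p : G × G => ∑' k : G, K (p.1, k) * L (k, p.2)) ≤
          kernelNorm K * kernelNorm L) ∧
    -- closed under the involution, isometrically
    (∀ K, mem𝒦 K →
        mem𝒦 (fun p : G × G => star (K (p.2, p.1))) ∧
        kernelNorm (fun p : G × G => star (K (p.2, p.1))) = kernelNorm K) ∧
    -- completeness
    (∀ u : ℕ → (G × G → C), (∀ n, mem𝒦 (u n)) →
        (∀ ε > (0 : ℝ), ∃ N, ∀ m ≥ N, ∀ n ≥ N, kernelNorm (u m - u n) < ε) →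
        ∃ K, mem𝒦 K ∧ Tendsto (fun n => kernelNorm (u n - K)) atTop (𝓝 0)) := by
  simp only [hmem]
  refine ⟨fun K L hK hL => ?_, fun a K hK => ?_, fun K L hK hL => ?_, fun K hK => ?_,
    fun u hu hcauchy => ?_⟩
  · have hKL : ∀ p, ‖(K + L) p‖ ≤ ‖K p‖ + ‖L p‖ := fun p => norm_add_le _ _
    exact ⟨⟨fun g h => add_mem (hK.1 g h) (hL.1 g h),
      kernelDomSet_nonempty_of_norm_le_add hKL hK.2 hL.2⟩, kernelNorm_le_add hKL hK.2 hL.2⟩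
  · exact ⟨fun g h => Submodule.smul_mem _ a (hK.1 g h), _,
      smul_mem_kernelDomSet a hK.2.some_mem⟩
  · refine ⟨⟨fun g h => tsum_mem (hclosed _) fun k => ?_, _,
      mul_mem_kernelDomSet hK.2.some_mem hL.2.some_mem⟩, kernelNorm_kernelMul_le hK.2 hL.2⟩
    simpa [mul_assoc] using hmulsub _ _ _ (hK.1 g k) _ (hL.1 k h)
  · refine ⟨⟨fun g h => ?_, (kernelDomSet_kernelStar K).symm ▸ hK.2⟩, kernelNorm_kernelStar K⟩
    simpa using hstarsub _ _ (hK.1 h g)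
  · obtain ⟨K, hlim, hK, htendsto⟩ :=
      exists_tendsto_kernelNorm_of_cauchy (fun n => (hu n).2) hcauchy
    exact ⟨K, ⟨fun g h => (hclosed _).mem_of_tendsto (hlim (g, h))
      (.of_forall fun n => (hu n).1 g h), hK⟩, htendsto⟩

/-- For a topologically `G`-graded C*-algebra `C`, the space `𝒦_G(C)` of
convolution dominated kernels `K : G × G → C` (with `K (g,h) ∈ C_{g h⁻¹}` and norm given by
the infimum of `ℓ¹`-norms of dominating functions) is a Banach *-algebra for the product
`(K ∙ L)(g,h) = ∑_k K(g,k) L(k,h)` and involution `K^∙(g,h) = K(h,g)*`. -/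
theorem convolution_dominated_kernels_banach_star_algebra {G : Type*} [Group G]
    {C : Type*} [NormedRing C] [StarRing C] [CStarRing C]
    [NormedAlgebra ℂ C] [StarModule ℂ C] [CompleteSpace C]
    (𝔠 : G → Submodule ℂ C)
    (hclosed : ∀ g, IsClosed (𝔠 g : Set C))
    (hmulsub : ∀ g h : G, ∀ x ∈ 𝔠 g, ∀ y ∈ 𝔠 h, x * y ∈ 𝔠 (g * h))
    (hstarsub : ∀ g : G, ∀ x ∈ 𝔠 g, star x ∈ 𝔠 g⁻¹)
    -- membership predicate for 𝒦_G(C)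
    (mem𝒦 : (G × G → C) → Prop)
    (hmem : ∀ K, mem𝒦 K ↔ ((∀ g h : G, K (g, h) ∈ 𝔠 (g * h⁻¹)) ∧
        (kernelDomSet K).Nonempty)) :
    -- vector space structure, with triangle inequality
    (∀ K L, mem𝒦 K → mem𝒦 L → mem𝒦 (K + L) ∧
        kernelNorm (K + L) ≤ kernelNorm K + kernelNorm L) ∧
    (∀ (c : ℂ) K, mem𝒦 K → mem𝒦 (c • K)) ∧
    -- closed under the product, with submultiplicative norm
    (∀ K L, mem𝒦 K → mem𝒦 L →
        mem𝒦 (fun p => ∑' k : G, K (p.1, k) * L (k, p.2)) ∧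
        kernelNorm (fun p : G × G => ∑' k : G, K (p.1, k) * L (k, p.2)) ≤
          kernelNorm K * kernelNorm L) ∧
    -- closed under the involution, isometrically
    (∀ K, mem𝒦 K →
        mem𝒦 (fun p : G × G => star (K (p.2, p.1))) ∧
        kernelNorm (fun p : G × G => star (K (p.2, p.1))) = kernelNorm K) ∧
    -- completeness
    (∀ u : ℕ → (G × G → C), (∀ n, mem𝒦 (u n)) →
        (∀ ε > (0 : ℝ), ∃ N, ∀ m ≥ N, ∀ n ≥ N, kernelNorm (u m - u n) < ε) →
        ∃ K, mem𝒦 K ∧ Tendsto (fun n => kernelNorm (u n - K)) atTop (𝓝 0)) :=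
  convolution_dominated_kernels_banach_star_algebra_general 𝔠 hclosed hmulsub hstarsub mem𝒦 hmem
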